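/- arXiv:0704.1969 — 4 statements merged into one kernel-verified Lean document; each statement's English description precedes it below -/
import Mathlib

section
/- The relation ⪯ on the set YFT_n of standard Young-Fibonacci tableaux of size n, defined as the reflexive–transitive closure of 't ⪯ t′ whenever t′ is obtained from t by shifting one entry', is a partial order, and (YFT_n, ⪯) is a graded poset whose rank function is t ↦ inv(min(t)): its covering relation is exactly 't′ is obtained from t by shifting one entry', and whenever t′ covers t one has inv(min(t′)) = inv(min(t)) + 1. -/
/-- A snakeshape: a composition all of whose parts equal 1 or 2, recorded as the
list of column heights, read left to right. -/
def IsSnakeshape (u : List ℕ) : Prop := ∀ p ∈ u, p = 1 ∨ p = 2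

/-- The shape (list of column heights, left to right) of a tableau given as a
list of columns, each column listed top to bottom. -/
def shapeOf (t : List (List ℕ)) : List ℕ := t.map List.length

/-- `t` is a standard Young–Fibonacci tableau of size `n`: columns are listed left
to right, each column top to bottom; every column has height 1 or 2; in each
column the top entry exceeds the bottom entry; every topmost entry exceeds all
entries in columns strictly to its right; and the entries are exactly `1,…,n`. -/
def IsYFT (n : ℕ) (t : List (List ℕ)) : Prop :=
  (∀ c ∈ t, c.length = 1 ∨ c.length = 2) ∧
  (∀ c ∈ t, List.Chain' (fun a b => b < a) c) ∧
  (∀ i j : ℕ, i < j → j < t.length →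
    ∀ a ∈ (t.getD i []).head?, ∀ x ∈ t.getD j [], x < a) ∧
  (t.flatten).Perm (List.range' 1 n)

/-- Auxiliary, fuelled version of the Young–Fibonacci insertion: reading the word
from right to left, each letter read gets matched to the largest not-yet-matched
letter occurring strictly to its left which exceeds it (forming a height-2 column,
larger letter on top), and otherwise stays single (a height-1 column); columns are
listed in the order in which their status was settled. -/
def insertColsAux : ℕ → List ℕ → List (List ℕ)
  | 0, _ => []
  | _, [] => []
  | fuel+1, w =>
    let x := w.getLast!
    let w' := w.dropLast
    match (w'.filter (fun y => decide (x < y))).max? with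
    | none => [x] :: insertColsAux fuel w'
    | some m => [m, x] :: insertColsAux fuel (w'.erase m)

/-- The Young–Fibonacci insertion tableau of a word. -/
def insertCols (w : List ℕ) : List (List ℕ) := insertColsAux w.length w

/-- The word `σ(1)⋯σ(n)` of a permutation of `{1,…,n}` (letters `1,…,n`). -/
def permWord {n : ℕ} (σ : Equiv.Perm (Fin n)) : List ℕ :=
  List.ofFn (fun i => (σ i : ℕ) + 1)

/-- min(t): read the columns right to left, each column top to bottom. -/
def minWord (t : List (List ℕ)) : List ℕ := t.reverse.flatten

/-- max(t): the top row left to right, then the bottom row right to left. -/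
def maxWord (t : List (List ℕ)) : List ℕ :=
  (t.filterMap fun c => if c.length = 2 then c.head? else none) ++
    (t.filterMap List.getLast?).reverse

/-- Number of inversions of a word: pairs of positions `p < q` with `w p > w q`. -/
def invCount (w : List ℕ) : ℕ :=
  ((Finset.range w.length ×ˢ Finset.range w.length).filter
    (fun p => p.1 < p.2 ∧ w.getD p.2 0 < w.getD p.1 0)).card

/-- `w'` is obtained from `w` by swapping two adjacent letters `x < y` (in this
order in `w`), thus creating exactly one more inversion. -/
def AdjSwap (w w' : List ℕ) : Prop :=
  ∃ l r : List ℕ, ∃ x y : ℕ, x < y ∧ w = l ++ x :: y :: r ∧ w' = l ++ y :: x :: r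

/-- The (right) weak order on words. -/
def WordWeakLe (w w' : List ℕ) : Prop := Relation.ReflTransGen AdjSwap w w'

/-- `Shift t t'`: `t'` is obtained from `t` by shifting one entry. Columns are
listed top to bottom, so `[b, a]` is the column with top `b`, bottom `a`. -/
inductive Shift : List (List ℕ) → List (List ℕ) → Prop
  /-- the bottom entry `a` of a height-2 column bumps up the single entry `c` of
  the column on its left; the top entry `b` falls down. -/
  | bump2 (l r : List (List ℕ)) (c b a : ℕ) :
      Shift (l ++ [[c], [b, a]] ++ r) (l ++ [[c, a], [b]] ++ r)
  /-- the entry `a` of a height-1 column bumps up the single entry `c` of the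
  column on its left; its own column disappears. -/
  | bump1 (l r : List (List ℕ)) (c a : ℕ) :
      Shift (l ++ [[c], [a]] ++ r) (l ++ [[c, a]] ++ r)
  /-- `a < c` replaces `c` at the bottom of the height-2 column on its left, and
  `c < b` takes the former place of `a`. -/
  | exch (l r : List (List ℕ)) (d c b a : ℕ) (h1 : a < c) (h2 : c < b) :
      Shift (l ++ [[d, c], [b, a]] ++ r) (l ++ [[d, a], [b, c]] ++ r)
  /-- `a < c` replaces `c` at the bottom of the height-2 column on its left; since
  `b < c`, `c` becomes a new height-1 column in between and `b` falls down. -/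
  | split2 (l r : List (List ℕ)) (d c b a : ℕ) (h1 : a < c) (h2 : b < c) :
      Shift (l ++ [[d, c], [b, a]] ++ r) (l ++ [[d, a], [c], [b]] ++ r)
  /-- `a < c` replaces `c` at the bottom of the height-2 column on its left; `c`
  becomes a new height-1 column and the height-1 column of `a` disappears. -/
  | split1 (l r : List (List ℕ)) (d c a : ℕ) (h1 : a < c) :
      Shift (l ++ [[d, c], [a]] ++ r) (l ++ [[d, a], [c]] ++ r)

/-- The bottom row of a tableau, read left to right: the bottom entries of the
height-2 columns together with the entries of the height-1 columns. -/
def bottomRow (t : List (List ℕ)) : List ℕ := t.filterMap List.getLast?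

/-- Generating relations of the canonical poset `P_t`: `canoGen t x y` means `x`
is covered... i.e. `x <_P y` is a generating relation: consecutive bottom-row
entries read right to left (rightmost lowest), and each top entry of a height-2
column below the corresponding bottom entry. -/
def canoGen (t : List (List ℕ)) (x y : ℕ) : Prop :=
  (∃ i : ℕ, i + 1 < (bottomRow t).length ∧
    (bottomRow t).getD (i + 1) 0 = x ∧ (bottomRow t).getD i 0 = y) ∨
  (∃ c ∈ t, c.length = 2 ∧ c.head? = some x ∧ c.getLast? = some y)

/-- `w` is (the word of) a linear extension of the canonical poset `P_t`. -/
def IsLinExt (t : List (List ℕ)) (w : List ℕ) : Prop :=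
  ∀ x y : ℕ, Relation.ReflTransGen (canoGen t) x y → x ≠ y →
    w.idxOf x < w.idxOf y

/-- The set of inversions of a word: pairs `(j, i)` with `i < j` such that `j`
occurs before `i`. -/
def InvSet (w : List ℕ) : Set (ℕ × ℕ) :=
  {p | p.2 < p.1 ∧ p.1 ∈ w ∧ p.2 ∈ w ∧ w.idxOf p.1 < w.idxOf p.2}

/-- The set of non-inversions of a word: pairs `(i, j)` with `i < j` such that `i`
occurs before `j`. -/
def NonInvSet (w : List ℕ) : Set (ℕ × ℕ) :=
  {p | p.1 < p.2 ∧ p.1 ∈ w ∧ p.2 ∈ w ∧ w.idxOf p.1 < w.idxOf p.2}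

/-- The row canonical tableau of shape `u` (size `n`): topmost cells are labelled
`n, n-1, …` from left to right, bottom cells of height-2 columns are labelled
`1, 2, …` from left to right. -/
def rTcols (n : ℕ) (u : List ℕ) : List (List ℕ) :=
  (List.range u.length).map (fun i =>
    if u.getD i 0 = 2 then [n - i, (u.take i).count 2 + 1] else [n - i])

/-- The column canonical tableau of shape `u`: cells are labelled `1, 2, …` taking
columns right to left, in each column the bottom cell before the top cell. -/
def cTcols (u : List ℕ) : List (List ℕ) :=
  (List.range u.length).map (fun i =>
    let s := u.sum - (u.take (i + 1)).sum
    if u.getD i 0 = 2 then [s + 2, s + 1] else [s + 1])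

/-- `t` is a semistandard Young–Fibonacci tableau of shape `u`: entries are
positive integers, in each column the top entry strictly exceeds the bottom one,
and every topmost entry is `≥` all entries in columns strictly to its right. -/
def IsSSYFT (u : List ℕ) (t : List (List ℕ)) : Prop :=
  shapeOf t = u ∧
  (∀ c ∈ t, List.Chain' (fun a b => b < a) c) ∧
  (∀ i j : ℕ, i < j → j < t.length →
    ∀ a ∈ (t.getD i []).head?, ∀ x ∈ t.getD j [], x ≤ a) ∧
  (∀ x ∈ t.flatten, 1 ≤ x)

/-- `t` has content `v`: for each `i`, `t` has exactly `v_i` entries equal to `i`.-/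
def ContentIs (v : List ℕ) (t : List (List ℕ)) : Prop :=
  ∀ i : ℕ, t.flatten.count (i + 1) = v.getD i 0

/-- The Young–Fibonacci number `N_{u,v}`: the number of semistandard
Young–Fibonacci tableaux of shape `u` and content `v`. -/
noncomputable def YFNumber (u v : List ℕ) : ℕ :=
  Nat.card {t : List (List ℕ) // IsSSYFT u t ∧ ContentIs v t}

/-- The multiset (as a list indexed by positions) `v^{1-}`: delete a part equal
to 1, or decrease a larger part by 1. -/
def vMinus (v : List ℕ) : List (List ℕ) :=
  (List.range v.length).map (fun p =>
    if v.getD p 0 = 1 then v.eraseIdx p else v.set p (v.getD p 0 - 1))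

/-- The list of snakeshapes covering `u` in the Young–Fibonacci lattice:
(i) prepend a part 1; (ii) replace the leftmost part equal to 1 by a 2;
(iii) if `u` starts with `k ≥ 1` parts equal to 2, insert a part 1 just after the
`i`-th part, `1 ≤ i ≤ k`. -/
def coversList (u : List ℕ) : List (List ℕ) :=
  [1 :: u] ++
    (if (u.takeWhile (fun p => decide (p = 2))).length < u.length then
      [u.take (u.takeWhile (fun p => decide (p = 2))).length ++
        2 :: u.drop ((u.takeWhile (fun p => decide (p = 2))).length + 1)]
    else []) ++
    ((List.range (u.takeWhile (fun p => decide (p = 2))).length).map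
      (fun i => u.insertIdx (i + 1) 1))

/-- Okada's analogue of the Kostka numbers (fuelled implementation of the
defining recurrences; `v.length` is enough fuel). -/
def OkadaKAux : ℕ → List ℕ → List ℕ → ℕ
  | _, [], [] => 1
  | fuel+1, 1 :: u, 1 :: v => OkadaKAux fuel u v
  | fuel+1, 2 :: u, 2 :: v => OkadaKAux fuel u v
  | _+1, 1 :: _, 2 :: _ => 0
  | fuel+1, 2 :: u, 1 :: v => ((coversList u).map (fun w => OkadaKAux fuel w v)).sum
  | _, _, _ => 0

/-- Okada's analogue `K_{u,v}` of the Kostka numbers, determined by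
`K_{∅,∅} = 1`, `K_{1u,1v} = K_{u,v}`, `K_{2u,2v} = K_{u,v}`, `K_{1u,2v} = 0` and
`K_{2u,1v} = Σ_{w covers u} K_{w,v}`. -/
def OkadaK (u v : List ℕ) : ℕ := OkadaKAux v.length u v

/-- The cells of a snakeshape `u`: pairs `(i, r)` with `i` the (0-based) column
index and `r = 0` for the bottom cell, `r = 1` for the top cell. -/
def cellsFinset (u : List ℕ) : Finset (ℕ × ℕ) :=
  (Finset.range u.length ×ˢ Finset.range 2).filter (fun p => p.2 < u.getD p.1 0)

/-- Generating relations of the poset `P_u` on the cells of `u`: the bottom-row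
cells read right to left form a chain (rightmost lowest), and the top cell of
each height-2 column lies strictly below its bottom cell. -/
def cellGen (u : List ℕ) (c c' : ℕ × ℕ) : Prop :=
  (∃ i : ℕ, i + 1 < u.length ∧ c = (i + 1, 0) ∧ c' = (i, 0)) ∨
  (∃ i : ℕ, i < u.length ∧ u.getD i 0 = 2 ∧ c = (i, 1) ∧ c' = (i, 0))

/-- The order relation of the poset `P_u`. -/
def cellLe (u : List ℕ) (c c' : ℕ × ℕ) : Prop :=
  Relation.ReflTransGen (cellGen u) c c'
/-- The weak order on standard Young–Fibonacci tableaux of size `n`: the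
reflexive–transitive closure of the relation of shifting one entry. -/
def YFTle (n : ℕ) (t t' : {t : List (List ℕ) // IsYFT n t}) : Prop :=
  Relation.ReflTransGen
    (fun a b : {t : List (List ℕ) // IsYFT n t} => Shift a.1 b.1) t t'

/-! Reading a tableau as `min(t)`, each kind of shift either swaps two adjacent
letters `a < c` into `c a`, or turns a factor `a d c` with `a < c < d` into `c d a`; both moves
create exactly one inversion. So `t ↦ inv(min(t))` increases by one along every shift, and any
relation with such a rank function generates a graded partial order whose covers are exactly its
steps. -/

namespace Relation

variable {α β : Type*} {r : α → α → Prop}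

theorem ReflTransGen.apply_le_apply [Preorder β] {f : α → β} (hf : ∀ a b, r a b → f a < f b)
    {a b : α} (h : ReflTransGen r a b) : f a ≤ f b := by
  induction h with
  | refl => exact le_rfl
  | tail _ hbc ih => exact ih.trans (hf _ _ hbc).le

theorem ReflTransGen.apply_lt_apply [Preorder β] {f : α → β} (hf : ∀ a b, r a b → f a < f b)
    {a b : α} (h : ReflTransGen r a b) (hne : a ≠ b) : f a < f b := by
  obtain rfl | ⟨c, hac, hcb⟩ := h.cases_head
  · exact absurd rfl hne
  · exact (hf _ _ hac).trans_le (hcb.apply_le_apply hf)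

theorem isPartialOrder_reflTransGen_of_apply_lt [Preorder β] {f : α → β}
    (hf : ∀ a b, r a b → f a < f b) : IsPartialOrder α (ReflTransGen r) where
  refl _ := .refl
  trans _ _ _ := ReflTransGen.trans
  antisymm a b hab hba := by
    by_contra hne
    exact lt_asymm (hab.apply_lt_apply hf hne) (hba.apply_lt_apply hf (Ne.symm hne))

theorem reflTransGen_covers_iff_of_rank {f : α → ℕ} (hf : ∀ a b, r a b → f b = f a + 1)
    {a b : α} :
    (ReflTransGen r a b ∧ a ≠ b ∧ ∀ s, ReflTransGen r a s → ReflTransGen r s b → s = a ∨ s = b)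
      ↔ r a b := by
  have hlt : ∀ a b, r a b → f a < f b := fun a b h => hf a b h ▸ Nat.lt_succ_self _
  constructor
  · rintro ⟨hab, hne, hbetween⟩
    obtain rfl | ⟨s, has, hsb⟩ := hab.cases_head
    · exact absurd rfl hne
    obtain rfl | rfl := hbetween s (.single has) hsb
    · have := hf _ _ has
      omega
    · exact has
  · intro hab
    refine ⟨.single hab, fun h => by have := hf _ _ hab; subst h; omega, ?_⟩
    intro s has hsb
    by_contra! hs
    have h1 := has.apply_lt_apply hlt (Ne.symm hs.1)
    have h2 := hsb.apply_lt_apply hlt hs.2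
    have h3 := hf _ _ hab
    omega

end Relation

open Relation

theorem invCount_eq_sum (w : List ℕ) :
    invCount w = ∑ p ∈ Finset.range w.length, ∑ q ∈ Finset.range w.length,
      if p < q ∧ w.getD q 0 < w.getD p 0 then 1 else 0 := by
  rw [invCount, Finset.card_filter, Finset.sum_product]

theorem invCount_cons (a : ℕ) (w : List ℕ) :
    invCount (a :: w) = w.countP (· < a) + invCount w := by
  have hcount : w.countP (· < a) =
      ∑ i ∈ Finset.range w.length, if w.getD i 0 < a then 1 else 0 := by
    induction w with
    | nil => simp
    | cons b w ih =>
      rw [List.countP_cons, List.length_cons, Finset.sum_range_succ']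
      simp [ih]
  rw [invCount_eq_sum, invCount_eq_sum, hcount, List.length_cons, Finset.sum_range_succ',
    add_comm]
  congr 1
  · rw [Finset.sum_range_succ']
    simp
  · refine Finset.sum_congr rfl fun p _ => ?_
    rw [Finset.sum_range_succ']
    simp

theorem invCount_append_swap (A B : List ℕ) {x y : ℕ} (h : x < y) :
    invCount (A ++ y :: x :: B) = invCount (A ++ x :: y :: B) + 1 := by
  induction A with
  | nil =>
    simp only [List.nil_append, invCount_cons, List.countP_cons, h, Nat.lt_asymm h, decide_true,
      decide_false, ↓reduceIte, Bool.false_eq_true, add_zero]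
    omega
  | cons a A ih =>
    have hcount : (A ++ y :: x :: B).countP (· < a) = (A ++ x :: y :: B).countP (· < a) := by
      simp only [List.countP_append, List.countP_cons]
      omega
    simp only [List.cons_append, invCount_cons, hcount, ih]
    omega

/-- Moving `a` and `c` past each other across `d` creates the inversions `(d, a)` and `(c, a)`
and resolves `(d, c)`. -/
theorem invCount_append_rotate (A B : List ℕ) {a c d : ℕ} (hac : a < c) (hcd : c < d) :
    invCount (A ++ c :: d :: a :: B) = invCount (A ++ a :: d :: c :: B) + 1 := by
  have s1 := invCount_append_swap (A ++ [a]) B hcd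
  have s2 := invCount_append_swap A (d :: B) hac
  have s3 := invCount_append_swap (A ++ [c]) B (hac.trans hcd)
  simp only [List.append_assoc, List.cons_append, List.nil_append] at s1 s2 s3
  omega

theorem Shift.invCount_minWord {t t' : List (List ℕ)} (h : Shift t t')
    (hcol : ∀ c ∈ t, c.IsChain (fun a b => b < a))
    (hcol' : ∀ c ∈ t', c.IsChain (fun a b => b < a)) :
    invCount (minWord t') = invCount (minWord t) + 1 := by
  cases h with
  | bump2 l r c b a =>
    have hac : a < c := by simpa using hcol' [c, a] (by simp)
    simpa [minWord] using invCount_append_swap (r.reverse.flatten ++ [b]) l.reverse.flatten hac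
  | bump1 l r c a =>
    have hac : a < c := by simpa using hcol' [c, a] (by simp)
    simpa [minWord] using invCount_append_swap r.reverse.flatten l.reverse.flatten hac
  | exch l r d c b a hac _ =>
    have hcd : c < d := by simpa using hcol [d, c] (by simp)
    simpa [minWord] using
      invCount_append_rotate (r.reverse.flatten ++ [b]) l.reverse.flatten hac hcd
  | split2 l r d c b a hac _ =>
    have hcd : c < d := by simpa using hcol [d, c] (by simp)
    simpa [minWord] using
      invCount_append_rotate (r.reverse.flatten ++ [b]) l.reverse.flatten hac hcd
  | split1 l r d c a hac =>
    have hcd : c < d := by simpa using hcol [d, c] (by simp)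
    simpa [minWord] using invCount_append_rotate r.reverse.flatten l.reverse.flatten hac hcd

/-- `⪯` is a partial order on `YFT_n`, its covering relation is
exactly the one-entry shift, and a shift raises `t ↦ inv(min(t))` by exactly one,
so the poset is graded with this rank function. -/
theorem weak_order_on_YFT_graded_poset (n : ℕ) :
    IsPartialOrder {t : List (List ℕ) // IsYFT n t} (YFTle n) ∧
    (∀ t t' : {t : List (List ℕ) // IsYFT n t},
      (YFTle n t t' ∧ t ≠ t' ∧
        ∀ s, YFTle n t s → YFTle n s t' → s = t ∨ s = t') ↔ Shift t.1 t'.1) ∧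
    (∀ t t' : {t : List (List ℕ) // IsYFT n t}, Shift t.1 t'.1 →
      invCount (minWord t'.1) = invCount (minWord t.1) + 1) := by
  have hrank : ∀ t t' : {t : List (List ℕ) // IsYFT n t}, Shift t.1 t'.1 →
      invCount (minWord t'.1) = invCount (minWord t.1) + 1 :=
    fun t t' h => h.invCount_minWord t.2.2.1 t'.2.2.1
  refine ⟨isPartialOrder_reflTransGen_of_apply_lt (f := fun t => invCount (minWord t.1))
    (fun t t' h => hrank t t' h ▸ Nat.lt_succ_self _),
    fun t t' => reflTransGen_covers_iff_of_rank hrank, hrank⟩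
end

section
/- Let t be a standard Young-Fibonacci tableau of size n. Then the Young-Fibonacci class of t is exactly the interval [min(t), max(t)] of the weak order on S_n; that is, for every permutation σ of {1,…,n}, P(σ) = t if and only if min(t) ≤ σ ≤ max(t) in the weak order. -/
/-!
The largest letter of `w` is the top entry of the first column `c` of `t`, and insertion pairs
the last letter `x` of `w` with it (or leaves `x` single when `x` is that letter). So the first
column of `P(w)` is `c` exactly when `x` is the bottom entry of `c`, and induction on the columns
shows that `P(w) = t` iff `w` is a linear extension of the canonical poset `P_t`: the bottom row
read from right to left, each top entry before the bottom entry of its column. Every such linear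
extension has all inversions of `min(t)` and only inversions of `max(t)`, and these two
conditions in turn force the relations of `P_t`. For permutations, inclusion of inversion sets is
the weak order.
-/

namespace YoungFibonacci

section Precedes

variable {α β : Type*}

def Precedes (l : List α) (a b : α) : Prop := [a, b].Sublist l

variable {l l₁ l₂ : List α} {a b c d : α}

theorem Precedes.mono (h : Precedes l₁ a b) (hl : l₁.Sublist l₂) : Precedes l₂ a b :=
  List.Sublist.trans h hl

theorem Precedes.mem_left (h : Precedes l a b) : a ∈ l := h.subset (by simp)

theorem Precedes.mem_right (h : Precedes l a b) : b ∈ l := h.subset (by simp)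

@[simp]
theorem not_precedes_nil : ¬ Precedes [] a b := by
  simp [Precedes]

theorem precedes_cons_iff : Precedes (c :: l) a b ↔ (a = c ∧ b ∈ l) ∨ Precedes l a b := by
  simp [Precedes, List.sublist_cons_iff]
  tauto

@[simp]
theorem not_precedes_singleton : ¬ Precedes [c] a b := by
  simp [precedes_cons_iff]

theorem precedes_append_iff :
    Precedes (l₁ ++ l₂) a b ↔ Precedes l₁ a b ∨ Precedes l₂ a b ∨ (a ∈ l₁ ∧ b ∈ l₂) := by
  induction l₁ with
  | nil => simp
  | cons c l₁ ih =>
    simp only [List.cons_append, precedes_cons_iff, ih, List.mem_append, List.mem_cons]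
    tauto

theorem precedes_append (ha : a ∈ l₁) (hb : b ∈ l₂) : Precedes (l₁ ++ l₂) a b :=
  precedes_append_iff.2 (Or.inr (Or.inr ⟨ha, hb⟩))

theorem precedes_concat_iff : Precedes (l ++ [c]) a b ↔ Precedes l a b ∨ (a ∈ l ∧ b = c) := by
  simp [precedes_append_iff]

theorem precedes_pair_iff : Precedes [c, d] a b ↔ a = c ∧ b = d := by
  simp [precedes_cons_iff]

theorem precedes_reverse_iff : Precedes l.reverse a b ↔ Precedes l b a := by
  simp [Precedes, ← List.reverse_sublist (l₁ := [a, b])]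

theorem Precedes.irrefl (hl : l.Nodup) : ¬ Precedes l a a := by
  induction l with
  | nil => simp
  | cons c l ih =>
    rw [precedes_cons_iff]
    rintro (⟨rfl, ha⟩ | h)
    · exact (List.nodup_cons.1 hl).1 ha
    · exact ih (List.nodup_cons.1 hl).2 h

theorem Precedes.trans (hl : l.Nodup) (h₁ : Precedes l a b) (h₂ : Precedes l b c) :
    Precedes l a c := by
  induction l with
  | nil => simp at h₁
  | cons d l ih =>
    obtain ⟨hd, hl⟩ := List.nodup_cons.1 hl
    rw [precedes_cons_iff] at h₁ h₂ ⊢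
    rcases h₂ with ⟨rfl, -⟩ | h₂
    · rcases h₁ with ⟨-, hb⟩ | h₁
      · exact absurd hb hd
      · exact absurd h₁.mem_right hd
    · rcases h₁ with ⟨rfl, -⟩ | h₁
      · exact Or.inl ⟨rfl, h₂.mem_right⟩
      · exact Or.inr (ih hl h₁ h₂)

theorem Precedes.asymm (hl : l.Nodup) (h₁ : Precedes l a b) : ¬ Precedes l b a :=
  fun h₂ => Precedes.irrefl hl (h₁.trans hl h₂)

theorem precedes_or_precedes (ha : a ∈ l) (hb : b ∈ l) (hab : a ≠ b) :
    Precedes l a b ∨ Precedes l b a := by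
  induction l with
  | nil => simp at ha
  | cons c l ih =>
    simp only [precedes_cons_iff]
    rcases List.mem_cons.1 ha with rfl | ha'
    · exact Or.inl (Or.inl ⟨rfl, (List.mem_cons.1 hb).resolve_left hab.symm⟩)
    rcases List.mem_cons.1 hb with rfl | hb'
    · exact Or.inr (Or.inl ⟨rfl, ha'⟩)
    rcases ih ha' hb' with h | h
    · exact Or.inl (Or.inr h)
    · exact Or.inr (Or.inr h)

theorem Precedes.erase [DecidableEq α] (h : Precedes l a b) (ha : a ≠ c) (hb : b ≠ c) :
    Precedes (l.erase c) a b := by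
  induction l with
  | nil => simp at h
  | cons d l ih =>
    by_cases hdc : d = c
    · subst hdc
      rw [List.erase_cons_head]
      exact (precedes_cons_iff.1 h).resolve_left (fun h' => ha h'.1)
    · rw [List.erase_cons_tail (by simpa using hdc), precedes_cons_iff]
      rcases precedes_cons_iff.1 h with ⟨rfl, hb'⟩ | h
      · exact Or.inl ⟨rfl, (List.mem_erase_of_ne hb).2 hb'⟩
      · exact Or.inr (ih h)

theorem precedes_iff_idxOf_lt [DecidableEq α] (hl : l.Nodup) :
    Precedes l a b ↔ a ∈ l ∧ b ∈ l ∧ l.idxOf a < l.idxOf b := by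
  induction l with
  | nil => simp
  | cons c l ih =>
    obtain ⟨hc, hl⟩ := List.nodup_cons.1 hl
    rw [precedes_cons_iff, ih hl]
    simp only [List.mem_cons, List.idxOf_cons]
    grind

theorem Precedes.exists_getD (h : Precedes l a b) (d : α) :
    ∃ i j, i < j ∧ j < l.length ∧ l.getD i d = a ∧ l.getD j d = b := by
  induction l with
  | nil => simp at h
  | cons c l ih =>
    rcases precedes_cons_iff.1 h with ⟨rfl, hb⟩ | h
    · obtain ⟨j, hj, rfl⟩ := List.mem_iff_getElem.1 hb
      exact ⟨0, j + 1, by omega, by simpa using hj, rfl, by simp [hj]⟩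
    · obtain ⟨i, j, hij, hj, rfl, rfl⟩ := ih h
      exact ⟨i + 1, j + 1, by omega, by simpa using hj, rfl, rfl⟩

theorem precedes_flatten_iff {L : List (List α)} :
    Precedes L.flatten a b ↔
      (∃ s r, Precedes L s r ∧ a ∈ s ∧ b ∈ r) ∨ ∃ s ∈ L, Precedes s a b := by
  induction L with
  | nil => simp
  | cons c L ih =>
    simp only [List.flatten_cons, precedes_append_iff, ih, precedes_cons_iff, List.mem_flatten,
      List.mem_cons]
    aesop

theorem precedes_filterMap_iff {f : α → Option β} {L : List α} {p q : β} :
    Precedes (L.filterMap f) p q ↔ ∃ a b, Precedes L a b ∧ f a = some p ∧ f b = some q := by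
  induction L with
  | nil => simp
  | cons c L ih =>
    cases hc : f c <;>
      simp only [List.filterMap_cons, hc, ih, precedes_cons_iff, List.mem_filterMap] <;> aesop

theorem not_mem_of_nodup_concat (h : (l ++ [a]).Nodup) : a ∉ l :=
  ((List.nodup_concat l a).1 (by rwa [List.concat_eq_append])).1

end Precedes

section WeakOrder

variable {u v l r : List ℕ} {a p q : ℕ}

theorem AdjSwap.precedes (h : AdjSwap u v) (hqp : q < p) (hu : Precedes u p q) :
    Precedes v p q := by
  obtain ⟨l, r, x, y, hxy, rfl, rfl⟩ := h
  simp only [precedes_append_iff, precedes_cons_iff, List.mem_cons] at hu ⊢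
  grind

theorem AdjSwap.cons (h : AdjSwap u v) : AdjSwap (a :: u) (a :: v) := by
  obtain ⟨l, r, x, y, hxy, rfl, rfl⟩ := h
  exact ⟨a :: l, r, x, y, hxy, rfl, rfl⟩

theorem WordWeakLe.precedes (h : WordWeakLe u v) (hqp : q < p) (hu : Precedes u p q) :
    Precedes v p q := by
  induction h with
  | refl => exact hu
  | tail _ hstep ih => exact AdjSwap.precedes hstep hqp ih

theorem WordWeakLe.cons (h : WordWeakLe u v) : WordWeakLe (a :: u) (a :: v) :=
  Relation.ReflTransGen.lift (a :: ·) (fun _ _ => AdjSwap.cons) u v h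

theorem wordWeakLe_move_front (hl : ∀ z ∈ l, z < a) :
    WordWeakLe (l ++ a :: r) (a :: (l ++ r)) := by
  induction l using List.reverseRecOn generalizing r with
  | nil => exact Relation.ReflTransGen.refl
  | append_singleton l z ih =>
    have hstep : AdjSwap (l ++ [z] ++ a :: r) (l ++ a :: z :: r) :=
      ⟨l, r, z, a, hl z (by simp), by simp, rfl⟩
    have hrest : WordWeakLe (l ++ a :: z :: r) (a :: (l ++ z :: r)) :=
      ih fun y hy => hl y (by simp [hy])
    simpa [WordWeakLe] using Relation.ReflTransGen.head hstep hrest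

/-- Bring the first letter `a` of `v` to the front of `u`: the letters it jumps over are smaller
than `a`, since a larger one would form an inversion of `u` missing from `v`. -/
theorem wordWeakLe_of_precedes (hu : u.Nodup) (huv : u.Perm v)
    (h : ∀ p q, q < p → Precedes u p q → Precedes v p q) : WordWeakLe u v := by
  induction v generalizing u with
  | nil => rw [huv.eq_nil]; exact Relation.ReflTransGen.refl
  | cons a v ih =>
    obtain ⟨l, r, rfl⟩ := List.append_of_mem (huv.mem_iff.2 List.mem_cons_self)
    have hv : (a :: v).Nodup := huv.nodup_iff.1 hu
    obtain ⟨ha, hlr⟩ := List.nodup_cons.1 (List.perm_middle.nodup_iff.1 hu)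
    have hlt : ∀ z ∈ l, z < a := by
      intro z hz
      by_contra hza
      have hprec := h z a (by grind) (precedes_append hz List.mem_cons_self)
      rcases precedes_cons_iff.1 hprec with ⟨rfl, -⟩ | hprec
      · exact ha (List.mem_append_left r hz)
      · exact (List.nodup_cons.1 hv).1 hprec.mem_right
    have hrest : WordWeakLe (l ++ r) v := by
      refine ih hlr (List.perm_middle.symm.trans huv).cons_inv fun p q hqp hpq => ?_
      have hpa : p ≠ a := fun hpa => ha (hpa ▸ hpq.mem_left)
      have := h p q hqp (hpq.mono (by simp))
      exact (precedes_cons_iff.1 this).resolve_left fun h' => hpa h'.1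
    exact (wordWeakLe_move_front hlt).trans (WordWeakLe.cons hrest)

theorem invSet_eq (hu : u.Nodup) : InvSet u = {pq | pq.2 < pq.1 ∧ Precedes u pq.1 pq.2} := by
  ext ⟨p, q⟩
  simp [InvSet, precedes_iff_idxOf_lt hu]

theorem wordWeakLe_iff_invSet_subset (hu : u.Nodup) (huv : u.Perm v) :
    WordWeakLe u v ↔ InvSet u ⊆ InvSet v := by
  rw [invSet_eq hu, invSet_eq (huv.nodup_iff.1 hu)]
  constructor
  · rintro h ⟨p, q⟩ ⟨hqp, hpq⟩
    exact ⟨hqp, WordWeakLe.precedes h hqp hpq⟩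
  · intro h
    exact wordWeakLe_of_precedes hu huv fun p q hqp hpq => (h (a := (p, q)) ⟨hqp, hpq⟩).2

end WeakOrder

section Tableau

def colTop (c : List ℕ) : ℕ := c.headD 0

def colBot (c : List ℕ) : ℕ := c.getLastD 0

/-- A Young–Fibonacci tableau whose entries are distinct but otherwise arbitrary; unlike
`IsYFT`, this is inherited by the columns to the right of the first one. -/
structure IsYFTableau (t : List (List ℕ)) : Prop where
  length_col : ∀ c ∈ t, c.length = 1 ∨ c.length = 2
  colBot_lt_colTop : ∀ c ∈ t, c.length = 2 → colBot c < colTop c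
  lt_colTop : ∀ a b, Precedes t a b → ∀ x ∈ b, x < colTop a
  nodup : t.flatten.Nodup

/-- The linear extensions of the canonical poset `P_t` (see `canoGen`), stated column by
column. -/
structure IsLinearExtension (t : List (List ℕ)) (w : List ℕ) : Prop where
  colBot_precedes : ∀ a b, Precedes t a b → Precedes w (colBot b) (colBot a)
  colTop_precedes_colBot : ∀ c ∈ t, c.length = 2 → Precedes w (colTop c) (colBot c)

variable {t : List (List ℕ)} {c : List ℕ} {w : List ℕ}

theorem col_cases (h : c.length = 1 ∨ c.length = 2) :
    (∃ x, c = [x]) ∨ ∃ x y, c = [x, y] := by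
  rwa [List.length_eq_one_iff, List.length_eq_two] at h

theorem colTop_mem (hc : c ≠ []) : colTop c ∈ c := by
  cases c <;> simp_all [colTop]

theorem colBot_mem (hc : c ≠ []) : colBot c ∈ c := by
  induction c using List.reverseRecOn <;> simp_all [colBot]

theorem head?_eq_some_colTop (hc : c ≠ []) : c.head? = some (colTop c) := by
  cases c <;> simp_all [colTop]

theorem getLast?_eq_some_colBot (hc : c ≠ []) : c.getLast? = some (colBot c) := by
  induction c using List.reverseRecOn <;> simp_all [colBot]

theorem IsYFTableau.ne_nil (ht : IsYFTableau t) (hc : c ∈ t) : c ≠ [] := by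
  rcases col_cases (ht.length_col c hc) with ⟨x, rfl⟩ | ⟨x, y, rfl⟩ <;> simp

theorem IsYFTableau.eq_colTop_or_eq_colBot (ht : IsYFTableau t) (hc : c ∈ t) {y : ℕ} (hy : y ∈ c) :
    y = colTop c ∨ y = colBot c := by
  rcases col_cases (ht.length_col c hc) with ⟨x, rfl⟩ | ⟨x, z, rfl⟩ <;>
    simpa [colTop, colBot] using hy

theorem IsYFTableau.tail (ht : IsYFTableau (c :: t)) : IsYFTableau t where
  length_col d hd := ht.length_col d (List.mem_cons_of_mem c hd)
  colBot_lt_colTop d hd := ht.colBot_lt_colTop d (List.mem_cons_of_mem c hd)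
  lt_colTop a b hab := ht.lt_colTop a b (hab.mono (List.sublist_cons_self c t))
  nodup := (List.nodup_append.1 ht.nodup).2.1

theorem IsYFTableau.not_mem_tail (ht : IsYFTableau (c :: t)) {y : ℕ} (hy : y ∈ c) :
    y ∉ t.flatten :=
  fun h => (List.nodup_append.1 ht.nodup).2.2 y hy y h rfl

theorem IsYFTableau.ne_of_precedes (ht : IsYFTableau t) {a b : List ℕ} (hab : Precedes t a b)
    {p q : ℕ} (hp : p ∈ a) (hq : q ∈ b) : p ≠ q := by
  rintro rfl
  exact Precedes.irrefl ht.nodup (precedes_flatten_iff.2 (Or.inl ⟨a, b, hab, hp, hq⟩))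

theorem IsYFTableau.le_colTop (ht : IsYFTableau (c :: t)) {y : ℕ} (hy : y ∈ (c :: t).flatten) :
    y ≤ colTop c := by
  obtain ⟨b, hb, hyb⟩ := List.mem_flatten.1 hy
  rcases List.mem_cons.1 hb with rfl | hb
  · rcases ht.eq_colTop_or_eq_colBot List.mem_cons_self hyb with rfl | rfl
    · exact le_rfl
    · rcases col_cases (ht.length_col b List.mem_cons_self) with ⟨x, rfl⟩ | ⟨x, z, hb2⟩
      · simp [colTop, colBot]
      · exact (ht.colBot_lt_colTop b List.mem_cons_self (by simp [hb2])).le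
  · exact (ht.lt_colTop c b (precedes_cons_iff.2 (Or.inl ⟨rfl, hb⟩)) y hyb).le

theorem isYFTableau_of_isYFT {n : ℕ} (ht : IsYFT n t) : IsYFTableau t where
  length_col := ht.1
  colBot_lt_colTop c hc hlen := by
    obtain ⟨x, y, rfl⟩ := List.length_eq_two.1 hlen
    exact (List.isChain_cons_cons.1 (ht.2.1 _ hc)).1
  lt_colTop a b hab x hx := by
    obtain ⟨i, j, hij, hj, rfl, rfl⟩ := hab.exists_getD []
    have hne : t.getD i [] ≠ [] := by
      rcases ht.1 _ hab.mem_left with h | h <;> exact List.ne_nil_of_length_pos (by omega)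
    exact ht.2.2.1 i j hij hj _ (head?_eq_some_colTop hne) x hx
  nodup := ht.2.2.2.nodup_iff.2 List.nodup_range'

end Tableau

section Words

variable {t : List (List ℕ)} {w : List ℕ} {c : List ℕ} {p q : ℕ}

theorem minWord_perm : (minWord t).Perm t.flatten :=
  (List.reverse_perm t).flatten

theorem precedes_minWord_iff :
    Precedes (minWord t) p q ↔
      (∃ a b, Precedes t b a ∧ p ∈ a ∧ q ∈ b) ∨ ∃ a ∈ t, Precedes a p q := by
  simp [minWord, precedes_flatten_iff, precedes_reverse_iff]

theorem ite_head?_eq_some_iff :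
    (if c.length = 2 then c.head? else none) = some p ↔ c.length = 2 ∧ p = colTop c := by
  rcases c with _ | ⟨x, c⟩ <;> simp [colTop, eq_comm]

theorem getLast?_eq_some_iff : c.getLast? = some p ↔ c ≠ [] ∧ p = colBot c := by
  rcases eq_or_ne c [] with rfl | hc
  · simp
  · simp [getLast?_eq_some_colBot hc, hc, eq_comm]

theorem IsYFTableau.precedes_maxWord_iff (ht : IsYFTableau t) :
    Precedes (maxWord t) p q ↔
      (∃ a b, Precedes t a b ∧ a.length = 2 ∧ b.length = 2 ∧ p = colTop a ∧ q = colTop b) ∨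
      (∃ a b, Precedes t a b ∧ p = colBot b ∧ q = colBot a) ∨
      ((∃ a ∈ t, a.length = 2 ∧ p = colTop a) ∧ ∃ b ∈ t, q = colBot b) := by
  simp only [maxWord, precedes_append_iff, precedes_reverse_iff, precedes_filterMap_iff,
    List.mem_reverse, List.mem_filterMap, ite_head?_eq_some_iff, getLast?_eq_some_iff]
  constructor
  · rintro (⟨a, b, hab, ⟨ha, rfl⟩, hb, rfl⟩ | ⟨a, b, hab, ⟨-, rfl⟩, -, rfl⟩ |
      ⟨⟨a, ha, ha2, rfl⟩, b, hb, -, rfl⟩)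
    · exact Or.inl ⟨a, b, hab, ha, hb, rfl, rfl⟩
    · exact Or.inr (Or.inl ⟨a, b, hab, rfl, rfl⟩)
    · exact Or.inr (Or.inr ⟨⟨a, ha, ha2, rfl⟩, b, hb, rfl⟩)
  · rintro (⟨a, b, hab, ha, hb, rfl, rfl⟩ | ⟨a, b, hab, rfl, rfl⟩ |
      ⟨⟨a, ha, ha2, rfl⟩, b, hb, rfl⟩)
    · exact Or.inl ⟨a, b, hab, ⟨ha, rfl⟩, hb, rfl⟩
    · exact Or.inr (Or.inl ⟨a, b, hab, ⟨ht.ne_nil hab.mem_left, rfl⟩, ht.ne_nil hab.mem_right, rfl⟩)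
    · exact Or.inr (Or.inr ⟨⟨a, ha, ha2, rfl⟩, b, hb, ht.ne_nil hb, rfl⟩)


theorem flatten_perm_tops_append_bottomRow (ht : ∀ c ∈ t, c.length = 1 ∨ c.length = 2) :
    t.flatten.Perm ((t.filterMap fun c => if c.length = 2 then c.head? else none) ++
      bottomRow t) := by
  induction t with
  | nil => simp [bottomRow]
  | cons c t ih =>
    have ih := ih fun d hd => ht d (List.mem_cons_of_mem c hd)
    rcases col_cases (ht c List.mem_cons_self) with ⟨x, rfl⟩ | ⟨x, y, rfl⟩
    · simpa [bottomRow] using (ih.cons x).trans List.perm_middle.symm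
    · simpa [bottomRow] using ((ih.cons y).trans List.perm_middle.symm).cons x

theorem IsYFTableau.maxWord_perm (ht : IsYFTableau t) : (maxWord t).Perm t.flatten :=
  ((List.reverse_perm _).append_left _).trans
    (flatten_perm_tops_append_bottomRow ht.length_col).symm

end Words

section LinearExtension

variable {t : List (List ℕ)} {w : List ℕ} {p q : ℕ}

theorem IsLinearExtension.eq_or_precedes_colBot (hl : IsLinearExtension t w)
    (ht : IsYFTableau t) {a : List ℕ} (ha : a ∈ t) (hp : p ∈ a) :
    p = colBot a ∨ Precedes w p (colBot a) := by
  rcases col_cases (ht.length_col a ha) with ⟨x, rfl⟩ | ⟨x, y, rfl⟩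
  · simp_all [colBot]
  · have := hl.colTop_precedes_colBot _ ha rfl
    simp only [List.mem_cons, List.not_mem_nil, or_false] at hp
    rcases hp with rfl | rfl <;> simp_all [colTop, colBot]

theorem IsLinearExtension.precedes_of_precedes_minWord (hl : IsLinearExtension t w)
    (ht : IsYFTableau t) (hw : w.Nodup) (hqp : q < p) (h : Precedes (minWord t) p q) :
    Precedes w p q := by
  rcases precedes_minWord_iff.1 h with ⟨a, b, hba, hpa, hqb⟩ | ⟨a, ha, hpq⟩
  · obtain rfl : q = colBot b := (ht.eq_colTop_or_eq_colBot hba.mem_left hqb).resolve_left fun hq =>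
      absurd (ht.lt_colTop b a hba p hpa) (by omega)
    rcases hl.eq_or_precedes_colBot ht hba.mem_right hpa with rfl | hp
    · exact hl.colBot_precedes b a hba
    · exact hp.trans hw (hl.colBot_precedes b a hba)
  · rcases col_cases (ht.length_col a ha) with ⟨x, rfl⟩ | ⟨x, y, rfl⟩
    · simp at hpq
    · obtain ⟨rfl, rfl⟩ := precedes_pair_iff.1 hpq
      simpa [colTop, colBot] using hl.colTop_precedes_colBot _ ha rfl

theorem IsLinearExtension.precedes_maxWord_of_precedes (hl : IsLinearExtension t w)
    (ht : IsYFTableau t) (hwt : w.Perm t.flatten) (hqp : q < p) (h : Precedes w p q) :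
    Precedes (maxWord t) p q := by
  have hw : w.Nodup := hwt.nodup_iff.2 ht.nodup
  have hmem : ∀ z ∈ w, z ∈ maxWord t := fun z hz => ht.maxWord_perm.mem_iff.2 (hwt.mem_iff.1 hz)
  refine (precedes_or_precedes (hmem p h.mem_left) (hmem q h.mem_right) (by omega)).resolve_right
    fun hmax => ?_
  rcases ht.precedes_maxWord_iff.1 hmax with ⟨a, b, hab, -, hb, rfl, rfl⟩ |
    ⟨a, b, hab, rfl, rfl⟩ | ⟨⟨a, ha, ha2, rfl⟩, b, hb, rfl⟩
  · exact absurd (ht.lt_colTop a b hab _ (colTop_mem (ht.ne_nil hab.mem_right))) (by omega)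
  · exact Precedes.asymm hw h (hl.colBot_precedes a b hab)
  · rcases eq_or_ne a b with rfl | hne
    · exact absurd (ht.colBot_lt_colTop a ha ha2) (by omega)
    rcases precedes_or_precedes ha hb hne with hab | hba
    · exact absurd (ht.lt_colTop a b hab _ (colBot_mem (ht.ne_nil hb))) (by omega)
    · exact Precedes.asymm hw h
        ((hl.colTop_precedes_colBot a ha ha2).trans hw (hl.colBot_precedes b a hba))

theorem isLinearExtension_of_precedes (ht : IsYFTableau t) (hwt : w.Perm t.flatten)
    (hmin : ∀ p q, q < p → Precedes (minWord t) p q → Precedes w p q)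
    (hmax : ∀ p q, q < p → Precedes w p q → Precedes (maxWord t) p q) :
    IsLinearExtension t w where
  colBot_precedes a b hab := by
    have ha := colBot_mem (ht.ne_nil hab.mem_left)
    have hb := colBot_mem (ht.ne_nil hab.mem_right)
    have hne : colBot b ≠ colBot a := (ht.ne_of_precedes hab ha hb).symm
    rcases lt_or_gt_of_ne hne with hlt | hlt
    · have hbw := hwt.mem_iff.2 (List.mem_flatten_of_mem hab.mem_right hb)
      have haw := hwt.mem_iff.2 (List.mem_flatten_of_mem hab.mem_left ha)
      refine (precedes_or_precedes hbw haw hne).resolve_right fun h => ?_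
      exact Precedes.asymm (ht.maxWord_perm.nodup_iff.2 ht.nodup) (hmax _ _ hlt h)
        (ht.precedes_maxWord_iff.2 (Or.inr (Or.inl ⟨a, b, hab, rfl, rfl⟩)))
    · exact hmin _ _ hlt (precedes_minWord_iff.2 (Or.inl ⟨b, a, hab, hb, ha⟩))
  colTop_precedes_colBot c hc hc2 := by
    refine hmin _ _ (ht.colBot_lt_colTop c hc hc2) (precedes_minWord_iff.2 (Or.inr ⟨c, hc, ?_⟩))
    obtain ⟨x, y, rfl⟩ := List.length_eq_two.1 hc2
    simp [colTop, colBot, precedes_pair_iff]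

theorem IsYFTableau.isLinearExtension_iff (ht : IsYFTableau t) (hwt : w.Perm t.flatten) :
    IsLinearExtension t w ↔ InvSet (minWord t) ⊆ InvSet w ∧ InvSet w ⊆ InvSet (maxWord t) := by
  have hw : w.Nodup := hwt.nodup_iff.2 ht.nodup
  rw [invSet_eq (minWord_perm.nodup_iff.2 ht.nodup), invSet_eq hw,
    invSet_eq (ht.maxWord_perm.nodup_iff.2 ht.nodup)]
  constructor
  · intro hl
    exact ⟨fun pq ⟨hqp, h⟩ => ⟨hqp, hl.precedes_of_precedes_minWord ht hw hqp h⟩,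
      fun pq ⟨hqp, h⟩ => ⟨hqp, hl.precedes_maxWord_of_precedes ht hwt hqp h⟩⟩
  · rintro ⟨hmin, hmax⟩
    exact isLinearExtension_of_precedes ht hwt (fun p q hqp h => (hmin (a := (p, q)) ⟨hqp, h⟩).2)
      (fun p q hqp h => (hmax (a := (p, q)) ⟨hqp, h⟩).2)


theorem IsLinearExtension.of_precedes (hl : IsLinearExtension t w) {w' : List ℕ}
    (ht : ∀ c ∈ t, c ≠ [])
    (h : ∀ p ∈ t.flatten, ∀ q ∈ t.flatten, Precedes w p q → Precedes w' p q) :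
    IsLinearExtension t w' where
  colBot_precedes a b hab := by
    have hmem : ∀ c ∈ t, colBot c ∈ t.flatten := fun c hc =>
      List.mem_flatten_of_mem hc (colBot_mem (ht c hc))
    exact h _ (hmem b hab.mem_right) _ (hmem a hab.mem_left) (hl.colBot_precedes a b hab)
  colTop_precedes_colBot c hc hc2 :=
    h _ (List.mem_flatten_of_mem hc (colTop_mem (ht c hc)))
      _ (List.mem_flatten_of_mem hc (colBot_mem (ht c hc))) (hl.colTop_precedes_colBot c hc hc2)

theorem isLinearExtension_cons_iff {c : List ℕ} :
    IsLinearExtension (c :: t) w ↔ IsLinearExtension t w ∧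
      (∀ b ∈ t, Precedes w (colBot b) (colBot c)) ∧
      (c.length = 2 → Precedes w (colTop c) (colBot c)) := by
  constructor
  · intro hl
    refine ⟨⟨fun a b hab => hl.colBot_precedes a b (hab.mono (List.sublist_cons_self c t)),
      fun d hd => hl.colTop_precedes_colBot d (List.mem_cons_of_mem c hd)⟩,
      fun b hb => hl.colBot_precedes c b (precedes_cons_iff.2 (Or.inl ⟨rfl, hb⟩)),
      hl.colTop_precedes_colBot c List.mem_cons_self⟩
  · rintro ⟨hl, hbot, htop⟩
    refine ⟨fun a b hab => ?_, fun d hd => ?_⟩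
    · rcases precedes_cons_iff.1 hab with ⟨rfl, hb⟩ | hab
      · exact hbot b hb
      · exact hl.colBot_precedes a b hab
    · rcases List.mem_cons.1 hd with rfl | hd
      · exact htop
      · exact hl.colTop_precedes_colBot d hd

theorem IsLinearExtension.precedes_colBot_head {c : List ℕ} (hl : IsLinearExtension (c :: t) w)
    (ht : IsYFTableau (c :: t)) (hw : w.Nodup) {y : ℕ} (hy : y ∈ (c :: t).flatten)
    (hne : y ≠ colBot c) : Precedes w y (colBot c) := by
  obtain ⟨b, hb, hyb⟩ := List.mem_flatten.1 hy
  rcases hl.eq_or_precedes_colBot ht hb hyb with rfl | h <;>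
    rcases List.mem_cons.1 hb with rfl | hb'
  · exact absurd rfl hne
  · exact hl.colBot_precedes _ b (precedes_cons_iff.2 (Or.inl ⟨rfl, hb'⟩))
  · exact h
  · exact h.trans hw (hl.colBot_precedes _ b (precedes_cons_iff.2 (Or.inl ⟨rfl, hb'⟩)))

theorem IsYFTableau.isLinearExtension_cons_concat_iff {c : List ℕ} {x : ℕ}
    (ht : IsYFTableau (c :: t)) (hw : (w ++ [x]).Perm (c :: t).flatten) :
    IsLinearExtension (c :: t) (w ++ [x]) ↔
      x = colBot c ∧ IsLinearExtension t (w.erase (colTop c)) := by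
  have hnd := hw.nodup_iff.2 ht.nodup
  have hx : x ∉ w := not_mem_of_nodup_concat hnd
  have hc := ht.ne_nil List.mem_cons_self
  have hne : ∀ d ∈ t, d ≠ [] := fun d hd => ht.tail.ne_nil hd
  constructor
  · intro hl
    have hxc : x = colBot c := by
      by_contra hxc
      rcases precedes_concat_iff.1 (hl.precedes_colBot_head ht hnd (hw.mem_iff.1 (by simp)) hxc)
        with h | ⟨-, h⟩
      · exact hx h.mem_left
      · exact hxc h.symm
    subst hxc
    refine ⟨rfl, (isLinearExtension_cons_iff.1 hl).1.of_precedes hne fun p hp q hq h => ?_⟩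
    have hnot : ∀ z ∈ t.flatten, z ≠ colBot c ∧ z ≠ colTop c := fun z hz =>
      ⟨fun h => ht.not_mem_tail (colBot_mem hc) (h ▸ hz),
        fun h => ht.not_mem_tail (colTop_mem hc) (h ▸ hz)⟩
    exact ((precedes_concat_iff.1 h).resolve_right fun h' => (hnot q hq).1 h'.2).erase
      (hnot p hp).2 (hnot q hq).2
  · rintro ⟨rfl, hl⟩
    have hmem : ∀ z ∈ (c :: t).flatten, z ≠ colBot c → z ∈ w := fun z hz hzc => by
      simpa [hzc] using hw.mem_iff.2 hz
    have hsub : (w.erase (colTop c)).Sublist (w ++ [colBot c]) :=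
      List.erase_sublist.trans (List.sublist_append_left w _)
    refine isLinearExtension_cons_iff.2
      ⟨hl.of_precedes hne fun p _ q _ h => h.mono hsub, fun b hb => ?_, fun hc2 => ?_⟩
    · refine precedes_append (hmem _ (List.mem_flatten_of_mem (List.mem_cons_of_mem c hb)
        (colBot_mem (hne b hb))) fun h => ?_) (List.mem_singleton_self _)
      exact ht.not_mem_tail (colBot_mem hc) (h ▸ List.mem_flatten_of_mem hb (colBot_mem (hne b hb)))
    · exact precedes_append (hmem _ (List.mem_flatten_of_mem List.mem_cons_self (colTop_mem hc))
        (ht.colBot_lt_colTop c List.mem_cons_self hc2).ne') (List.mem_singleton_self _)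

end LinearExtension

section Insertion

theorem insertColsAux_congr : ∀ {f g : ℕ} {w : List ℕ}, w.length ≤ f → w.length ≤ g →
    insertColsAux f w = insertColsAux g w
  | 0, g, w, hf, _ => by
    rw [List.length_eq_zero_iff.1 (Nat.le_zero.1 hf)]
    cases g <;> rfl
  | f + 1, 0, w, _, hg => by
    rw [List.length_eq_zero_iff.1 (Nat.le_zero.1 hg)]
    rfl
  | f + 1, g + 1, [], _, _ => rfl
  | f + 1, g + 1, y :: ys, hf, hg => by
    have hlen : ((y :: ys).dropLast).length = ys.length := by simp
    simp only [insertColsAux]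
    simp only [List.length_cons, Nat.add_le_add_iff_right] at hf hg
    split
    · exact congrArg _ (insertColsAux_congr (by omega) (by omega))
    · next m _ =>
      have := ((y :: ys).dropLast.erase_sublist (a := m)).length_le
      exact congrArg _ (insertColsAux_congr (by omega) (by omega))

theorem insertCols_concat (w : List ℕ) (x : ℕ) :
    insertCols (w ++ [x]) =
      match (w.filter (fun y => decide (x < y))).max? with
      | none => [x] :: insertCols w
      | some m => [m, x] :: insertCols (w.erase m) := by
  have hx : (w ++ [x]).getLast! = x := List.getLast!_of_getLast? List.getLast?_concat
  rw [insertCols, List.length_append, List.length_singleton,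
    insertColsAux.eq_3 _ _ (by simp), hx, List.dropLast_concat]
  split
  · exact congrArg _ (insertColsAux_congr le_rfl le_rfl)
  · next m _ =>
    exact congrArg _ (insertColsAux_congr (List.erase_sublist.length_le) le_rfl)

variable {c : List ℕ} {t : List (List ℕ)} {w : List ℕ} {x : ℕ}

/-- The largest entry `colTop c` of the tableau is either the last letter `x`, which then stays
single, or the letter that `x` is matched to. -/
theorem IsYFTableau.insertCols_eq_cons (ht : IsYFTableau (c :: t))
    (hw : (w ++ [x]).Perm (c :: t).flatten) :
    insertCols (w ++ [x]) =
      (if x = colTop c then [x] else [colTop c, x]) :: insertCols (w.erase (colTop c)) := by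
  have hx : x ∉ w := not_mem_of_nodup_concat (hw.nodup_iff.2 ht.nodup)
  have hle : ∀ y ∈ w ++ [x], y ≤ colTop c := fun y hy => ht.le_colTop (hw.mem_iff.1 hy)
  have htop : colTop c ∈ w ++ [x] := hw.mem_iff.2
    (List.mem_flatten_of_mem List.mem_cons_self (colTop_mem (ht.ne_nil List.mem_cons_self)))
  rw [insertCols_concat]
  split_ifs with hxt
  · subst hxt
    have hnone : w.filter (fun y => decide (colTop c < y)) = [] :=
      List.filter_eq_nil_iff.2 fun y hy => by simpa using hle y (by simp [hy])
    rw [List.max?_eq_none_iff.2 hnone, List.erase_of_not_mem hx]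
  · have htw : colTop c ∈ w := by simpa [Ne.symm hxt] using htop
    have hxt : x < colTop c := lt_of_le_of_ne (hle x (by simp)) hxt
    have hsome : (w.filter (fun y => decide (x < y))).max? = some (colTop c) :=
      List.max?_eq_some_iff.2 ⟨List.mem_filter.2 ⟨htw, by simpa using hxt⟩,
        fun y hy => hle y (by simp [(List.mem_filter.1 hy).1])⟩
    rw [hsome]

theorem IsYFTableau.ite_eq_head_iff (ht : IsYFTableau (c :: t)) :
    (if x = colTop c then [x] else [colTop c, x]) = c ↔ x = colBot c := by
  rcases col_cases (ht.length_col c List.mem_cons_self) with ⟨y, rfl⟩ | ⟨y, z, rfl⟩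
  · split_ifs <;> simp_all [colTop, colBot]
  · have := ht.colBot_lt_colTop _ List.mem_cons_self rfl
    simp only [colTop, colBot] at this
    split_ifs <;> simp_all [colTop, colBot]; omega

theorem IsYFTableau.perm_erase_colTop (ht : IsYFTableau (c :: t))
    (hw : (w ++ [colBot c]).Perm (c :: t).flatten) : (w.erase (colTop c)).Perm t.flatten := by
  have hcw := (List.perm_append_singleton _ _).symm.trans hw
  rcases col_cases (ht.length_col c List.mem_cons_self) with ⟨y, rfl⟩ | ⟨y, z, rfl⟩
  · have hy : y ∉ w := not_mem_of_nodup_concat (hw.nodup_iff.2 ht.nodup)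
    simpa [colTop, colBot, List.erase_of_not_mem hy] using hcw
  · simpa [colTop, colBot] using ((hcw.trans (List.Perm.swap z y _)).cons_inv).erase y

theorem IsYFTableau.insertCols_eq_iff (ht : IsYFTableau t) (hw : w.Perm t.flatten) :
    insertCols w = t ↔ IsLinearExtension t w := by
  induction t generalizing w with
  | nil =>
    rw [hw.eq_nil]
    exact iff_of_true rfl ⟨by simp, by simp⟩
  | cons c t ih =>
    obtain ⟨w, x, rfl⟩ := (List.eq_nil_or_concat' w).resolve_left fun h =>
      ht.ne_nil List.mem_cons_self (List.append_eq_nil_iff.1 (h ▸ hw).symm.eq_nil).1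
    rw [ht.insertCols_eq_cons hw, List.cons.injEq, ht.ite_eq_head_iff,
      ht.isLinearExtension_cons_concat_iff hw]
    exact and_congr_right fun hx => ih ht.tail (ht.perm_erase_colTop (hx ▸ hw))

end Insertion

end YoungFibonacci

open YoungFibonacci in
/-- the Young–Fibonacci class of `t` is exactly the interval
`[min(t), max(t)]` of the weak order on `S_n`. -/
theorem yf_class_eq_weak_order_interval (n : ℕ) (t : List (List ℕ))
    (ht : IsYFT n t) (w : List ℕ) (hw : w.Perm (List.range' 1 n)) :
    insertCols w = t ↔ WordWeakLe (minWord t) w ∧ WordWeakLe w (maxWord t) := by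
  have hyf : IsYFTableau t := isYFTableau_of_isYFT ht
  have hwt : w.Perm t.flatten := hw.trans ht.2.2.2.symm
  rw [hyf.insertCols_eq_iff hwt, hyf.isLinearExtension_iff hwt,
    wordWeakLe_iff_invSet_subset (minWord_perm.nodup_iff.2 hyf.nodup) (minWord_perm.trans hwt.symm),
    wordWeakLe_iff_invSet_subset (hwt.nodup_iff.2 hyf.nodup) (hwt.trans hyf.maxWord_perm.symm)]
end

section
/- Let t be a standard Young-Fibonacci tableau of size n. Then the Young-Fibonacci class of t equals the set of linear extensions of the canonical poset P_t; that is, for every permutation σ of {1,…,n}, P(σ) = t if and only if σ is a linear extension of P_t. -/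
theorem Relation.ReflTransGen.lt_of_ne {α β : Type*} [Preorder β] {r : α → α → Prop}
    {f : α → β} (hf : ∀ x y, r x y → f x < f y) {x y : α} (h : Relation.ReflTransGen r x y)
    (hne : x ≠ y) : f x < f y := by
  obtain rfl | htg := Relation.reflTransGen_iff_eq_or_transGen.mp h
  · exact absurd rfl hne
  clear h hne
  induction htg with
  | single hxy => exact hf _ _ hxy
  | tail _ hyz ih => exact ih.trans (hf _ _ hyz)

theorem Relation.forall_reflTransGen_lt_iff {α β : Type*} [Preorder β] {r : α → α → Prop}
    {f : α → β} (hr : ∀ x y, r x y → x ≠ y) :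
    (∀ x y, Relation.ReflTransGen r x y → x ≠ y → f x < f y) ↔
      ∀ x y, r x y → f x < f y :=
  ⟨fun h x y hxy => h x y (.single hxy) (hr x y hxy),
    fun hf _ _ => Relation.ReflTransGen.lt_of_ne hf⟩

theorem List.Nodup.idxOf_erase_lt_iff {α : Type*} [BEq α] [LawfulBEq α] {l : List α}
    (hl : l.Nodup) {m a b : α} (ha : a ∈ l.erase m) (hb : b ∈ l.erase m) :
    (l.erase m).idxOf a < (l.erase m).idxOf b ↔ l.idxOf a < l.idxOf b := by
  induction l with
  | nil => simp at ha
  | cons c l ih =>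
    obtain ⟨hcl, hl⟩ := List.nodup_cons.mp hl
    by_cases hcm : c = m
    · subst hcm
      rw [List.erase_cons_head] at ha hb ⊢
      rw [List.idxOf_cons_ne l (by rintro rfl; exact hcl ha),
        List.idxOf_cons_ne l (by rintro rfl; exact hcl hb)]
      omega
    · rw [List.erase_cons_tail (by simpa using hcm)] at ha hb ⊢
      have hc : ∀ {e}, e ∈ l.erase m → c ≠ e :=
        fun he h => hcl (h ▸ List.mem_of_mem_erase he)
      rcases List.mem_cons.mp ha with rfl | ha' <;> rcases List.mem_cons.mp hb with rfl | hb'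
      · simp
      · simp [List.idxOf_cons_ne _ (hc hb')]
      · simp [List.idxOf_cons_ne _ (hc ha')]
      · simp [List.idxOf_cons_ne _ (hc ha'), List.idxOf_cons_ne _ (hc hb'), ih hl ha' hb']


theorem insertColsAux_congr_fuel :
    ∀ {N M : ℕ} {w : List ℕ}, w.length ≤ N → w.length ≤ M →
      insertColsAux N w = insertColsAux M w
  | N, M, [], _, _ => by cases N <;> cases M <;> rfl
  | N + 1, M + 1, a :: w, hN, hM => by
    simp only [insertColsAux]
    split <;> congr 1 <;> apply insertColsAux_congr_fuel <;>
      grind [List.length_erase_le]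
  | 0, _, _ :: _, h, _ | _, 0, _ :: _, _, h => by simp at h

theorem insertCols_append_singleton_of_max?_eq_none {w : List ℕ} {x : ℕ}
    (h : (w.filter (x < ·)).max? = none) : insertCols (w ++ [x]) = [x] :: insertCols w := by
  simp [insertCols, insertColsAux, h]

theorem insertCols_append_singleton_of_max?_eq_some {w : List ℕ} {x m : ℕ}
    (h : (w.filter (x < ·)).max? = some m) :
    insertCols (w ++ [x]) = [m, x] :: insertCols (w.erase m) := by
  simpa [insertCols, insertColsAux, h] using insertColsAux_congr_fuel List.length_erase_le le_rfl

/-- A Young–Fibonacci tableau with distinct, but otherwise arbitrary, entries: unlike `IsYFT`,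
this is inherited by the tableau without its first column. -/
def IsYFTableau (t : List (List ℕ)) : Prop :=
  (∀ c ∈ t, c.length = 1 ∨ c.length = 2) ∧
  (∀ c ∈ t, List.IsChain (fun a b => b < a) c) ∧
  (∀ i j : ℕ, i < j → j < t.length →
    ∀ a ∈ (t.getD i []).head?, ∀ x ∈ t.getD j [], x < a) ∧
  t.flatten.Nodup

theorem IsYFT.isYFTableau {n : ℕ} {t : List (List ℕ)} (ht : IsYFT n t) : IsYFTableau t :=
  ⟨ht.1, ht.2.1, ht.2.2.1, ht.2.2.2.nodup_iff.mpr List.nodup_range'⟩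

namespace IsYFTableau

variable {c : List ℕ} {t : List (List ℕ)}

theorem ne_nil (ht : IsYFTableau t) : ∀ c ∈ t, c ≠ [] := by
  rintro c hc rfl
  simpa using ht.1 [] hc

theorem tail (ht : IsYFTableau (c :: t)) : IsYFTableau t := by
  obtain ⟨hlen, hchain, htop, hnd⟩ := ht
  refine ⟨fun d hd => hlen d (.tail _ hd), fun d hd => hchain d (.tail _ hd), ?_,
    (List.nodup_append.mp (List.flatten_cons ▸ hnd)).2.1⟩
  intro i j hij hj a ha x hx
  exact htop (i + 1) (j + 1) (by omega) (by simpa using hj) a ha x hx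

theorem lt_of_mem_head? (ht : IsYFTableau (c :: t)) {a : ℕ} (ha : a ∈ c.head?) :
    ∀ e ∈ t.flatten, e < a := by
  intro e he
  obtain ⟨d, hd, hed⟩ := List.mem_flatten.mp he
  obtain ⟨j, hj, rfl⟩ := List.mem_iff_getElem.mp hd
  exact ht.2.2.1 0 (j + 1) (by omega) (by simpa using hj) a ha e (by simpa [hj] using hed)

end IsYFTableau

section CanonicalPoset

variable {c : List ℕ} {t : List (List ℕ)} {x y : ℕ}

theorem bottomRow_cons (hc : c ≠ []) : bottomRow (c :: t) = c.getLast hc :: bottomRow t := by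
  simp [bottomRow, List.getLast?_eq_some_getLast hc]

theorem bottomRow_sublist_flatten : ∀ t : List (List ℕ), (bottomRow t).Sublist t.flatten
  | [] => .slnil
  | [] :: t => by simpa [bottomRow, List.filterMap_cons] using bottomRow_sublist_flatten t
  | (a :: c) :: t => by
    rw [bottomRow_cons (List.cons_ne_nil a c), List.flatten_cons]
    exact (List.singleton_sublist.mpr (List.getLast_mem _)).append (bottomRow_sublist_flatten t)

theorem canoGen.cons (hc : c ≠ []) (h : canoGen t x y) : canoGen (c :: t) x y := by
  rcases h with ⟨i, hi, hx, hy⟩ | ⟨d, hd, h⟩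
  · exact .inl ⟨i + 1, by simp [bottomRow_cons hc, hi], by simpa [bottomRow_cons hc] using hx,
      by simpa [bottomRow_cons hc] using hy⟩
  · exact .inr ⟨d, .tail _ hd, h⟩

theorem canoGen.eq_getLast_or_of_cons (hc : c ≠ []) (h : canoGen (c :: t) x y) :
    y = c.getLast hc ∨ canoGen t x y := by
  rcases h with ⟨_ | i, hi, hx, hy⟩ | ⟨d, hd, h⟩
  · exact .inl (by simpa [bottomRow_cons hc] using hy.symm)
  · exact .inr (.inl ⟨i, by simpa [bottomRow_cons hc] using hi,
      by simpa [bottomRow_cons hc] using hx, by simpa [bottomRow_cons hc] using hy⟩)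
  · rcases List.mem_cons.mp hd with rfl | hd
    · exact .inl (by simpa [List.getLast?_eq_some_getLast hc, eq_comm] using h.2.2)
    · exact .inr (.inr ⟨d, hd, h⟩)

theorem canoGen.mem_flatten (h : canoGen t x y) : x ∈ t.flatten ∧ y ∈ t.flatten := by
  rcases h with ⟨i, hi, rfl, rfl⟩ | ⟨d, hd, -, hx, hy⟩
  · have hsub := (bottomRow_sublist_flatten t).subset
    rw [List.getD_eq_getElem _ _ hi, List.getD_eq_getElem _ _ (by omega)]
    exact ⟨hsub (List.getElem_mem _), hsub (List.getElem_mem _)⟩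
  · exact ⟨List.mem_flatten.mpr ⟨d, hd, List.mem_of_head? hx⟩,
      List.mem_flatten.mpr ⟨d, hd, List.mem_of_getLast? hy⟩⟩

theorem IsYFTableau.canoGen_ne (ht : IsYFTableau t) (h : canoGen t x y) : x ≠ y := by
  rcases h with ⟨i, hi, rfl, rfl⟩ | ⟨d, hd, hlen, hx, hy⟩
  · have hnd := ht.2.2.2.sublist (bottomRow_sublist_flatten t)
    rw [List.getD_eq_getElem _ _ hi, List.getD_eq_getElem _ _ (by omega), Ne,
      hnd.getElem_inj_iff]
    omega
  · obtain ⟨p, q, rfl⟩ := List.length_eq_two.mp hlen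
    simp only [List.head?_cons, List.getLast?_cons_cons, List.getLast?_singleton,
      Option.some.injEq] at hx hy
    subst hx hy
    exact (List.isChain_cons_cons.mp (ht.2.1 _ hd)).1.ne'

theorem IsYFTableau.reflTransGen_canoGen_getLast_of_mem (ht : IsYFTableau (c :: t))
    (hc : c ≠ []) : ∀ e ∈ c, Relation.ReflTransGen (canoGen (c :: t)) e (c.getLast hc) := by
  rcases ht.1 c List.mem_cons_self with hlen | hlen
  · obtain ⟨b, rfl⟩ := List.length_eq_one_iff.mp hlen
    rintro e (_ | ⟨_, ⟨⟩⟩)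
    rfl
  · obtain ⟨m, b, rfl⟩ := List.length_eq_two.mp hlen
    rintro e (_ | ⟨_, _ | ⟨_, ⟨⟩⟩⟩)
    · exact .single (.inr ⟨_, List.mem_cons_self, rfl, rfl, rfl⟩)
    · rfl

theorem IsYFTableau.reflTransGen_canoGen_getLast (ht : IsYFTableau (c :: t)) (hc : c ≠ []) :
    ∀ e ∈ (c :: t).flatten, Relation.ReflTransGen (canoGen (c :: t)) e (c.getLast hc) := by
  induction t generalizing c with
  | nil => simpa using ht.reflTransGen_canoGen_getLast_of_mem hc
  | cons d t ih =>
    intro e he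
    rcases List.mem_append.mp (List.flatten_cons ▸ he) with he | he
    · exact ht.reflTransGen_canoGen_getLast_of_mem hc e he
    have hd := ht.ne_nil d (by simp)
    have hstep : canoGen (c :: d :: t) (d.getLast hd) (c.getLast hc) :=
      .inl ⟨0, by simp [bottomRow_cons hc, bottomRow_cons hd],
        by simp [bottomRow_cons hc, bottomRow_cons hd], by simp [bottomRow_cons hc]⟩
    exact (Relation.ReflTransGen.mono (fun _ _ => canoGen.cons hc) _ _
      (ih ht.tail hd e he)).tail hstep

end CanonicalPoset

def RespectsCanoGen (t : List (List ℕ)) (w : List ℕ) : Prop :=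
  ∀ x y, canoGen t x y → w.idxOf x < w.idxOf y

theorem IsYFTableau.isLinExt_iff {t : List (List ℕ)} (ht : IsYFTableau t) {w : List ℕ} :
    IsLinExt t w ↔ RespectsCanoGen t w :=
  Relation.forall_reflTransGen_lt_iff (f := (w.idxOf ·)) fun _ _ => ht.canoGen_ne

section FirstColumn

variable {c : List ℕ} {t : List (List ℕ)} {w : List ℕ} {x : ℕ}

theorem IsYFTableau.perm_erase_head (ht : IsYFTableau (c :: t)) (hc : c ≠ [])
    (hw : (w ++ [c.getLast hc]).Perm (c :: t).flatten) : (w.erase (c.head hc)).Perm t.flatten := by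
  rcases ht.1 c List.mem_cons_self with hlen | hlen
  · obtain ⟨b, rfl⟩ := List.length_eq_one_iff.mp hlen
    have hw' : w.Perm t.flatten := by
      refine (List.perm_append_right_iff [b]).mp (hw.trans ?_)
      exact (List.perm_append_singleton b t.flatten).symm
    have hb : b ∉ w := hw'.mem_iff.not.mpr (List.nodup_cons.mp ht.2.2.2).1
    simpa [List.erase_of_not_mem hb] using hw'
  · obtain ⟨m, b, rfl⟩ := List.length_eq_two.mp hlen
    have hw' : w.Perm (m :: t.flatten) := by
      refine (List.perm_append_right_iff [b]).mp (hw.trans ?_)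
      exact (List.Perm.swap b m t.flatten).trans (List.perm_append_singleton b _).symm
    simpa using hw'.erase m

theorem IsYFTableau.respectsCanoGen_cons_iff (ht : IsYFTableau (c :: t)) (hc : c ≠ [])
    (hw : (w ++ [x]).Perm (c :: t).flatten) :
    RespectsCanoGen (c :: t) (w ++ [x]) ↔
      x = c.getLast hc ∧ RespectsCanoGen t (w.erase (c.head hc)) := by
  obtain ⟨hxw, hwnd⟩ :=
    (List.nodup_concat w x).mp (List.concat_eq_append ▸ hw.nodup_iff.mpr ht.2.2.2)
  have hx : (w ++ [x]).idxOf x = w.length := by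
    rw [List.idxOf_append_of_notMem hxw, List.idxOf_cons_self, add_zero]
  have hlt_x : ∀ p ∈ (c :: t).flatten, p ≠ x → (w ++ [x]).idxOf p < (w ++ [x]).idxOf x := by
    intro p hp hpx
    have hpw : p ∈ w := by simpa [hpx] using hw.mem_iff.mpr hp
    rw [hx, List.idxOf_append_of_mem hpw]
    exact List.idxOf_lt_length_of_mem hpw
  have htransfer (hxc : x = c.getLast hc) {p q : ℕ} (hpq : canoGen t p q) :
      (w.erase (c.head hc)).idxOf p < (w.erase (c.head hc)).idxOf q ↔
        (w ++ [x]).idxOf p < (w ++ [x]).idxOf q := by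
    have hperm := ht.perm_erase_head hc (hxc ▸ hw)
    have hp := hperm.mem_iff.mpr hpq.mem_flatten.1
    have hq := hperm.mem_iff.mpr hpq.mem_flatten.2
    rw [List.idxOf_append_of_mem (List.mem_of_mem_erase hp),
      List.idxOf_append_of_mem (List.mem_of_mem_erase hq)]
    exact hwnd.idxOf_erase_lt_iff hp hq
  constructor
  · intro h
    have hxc : x = c.getLast hc := by
      by_contra hne
      have hb : c.getLast hc ∈ (c :: t).flatten :=
        List.mem_flatten_of_mem List.mem_cons_self (List.getLast_mem hc)
      exact (hlt_x _ hb (Ne.symm hne)).not_gt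
        ((ht.reflTransGen_canoGen_getLast hc x (hw.subset (by simp))).lt_of_ne h hne)
    exact ⟨hxc, fun p q hpq => (htransfer hxc hpq).mpr (h p q (hpq.cons hc))⟩
  · rintro ⟨hxc, h⟩ p q hpq
    rcases hpq.eq_getLast_or_of_cons hc with rfl | hpq'
    · exact hxc ▸ hlt_x p hpq.mem_flatten.1 (hxc ▸ ht.canoGen_ne hpq)
    · exact (htransfer hxc hpq').mp (h p q hpq')

theorem IsYFTableau.insertCols_eq_cons_iff (ht : IsYFTableau (c :: t)) (hc : c ≠ [])
    (hw : (w ++ [x]).Perm (c :: t).flatten) :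
    insertCols (w ++ [x]) = c :: t ↔
      x = c.getLast hc ∧ insertCols (w.erase (c.head hc)) = t := by
  have hxw : x ∉ w :=
    ((List.nodup_concat w x).mp (List.concat_eq_append ▸ hw.nodup_iff.mpr ht.2.2.2)).1
  constructor
  · intro h
    cases hm : (w.filter (x < ·)).max? with
    | none =>
      obtain ⟨rfl, rfl⟩ := List.cons.inj (insertCols_append_singleton_of_max?_eq_none hm ▸ h)
      simp [List.erase_of_not_mem hxw]
    | some m =>
      obtain ⟨rfl, rfl⟩ := List.cons.inj (insertCols_append_singleton_of_max?_eq_some hm ▸ h)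
      simp
  · rintro ⟨rfl, h⟩
    have hlt : ∀ e ∈ w, e ≠ c.head hc → e < c.head hc := fun e he hne =>
      ht.lt_of_mem_head? (List.head?_eq_some_head hc) e
        ((ht.perm_erase_head hc hw).subset (List.mem_erase_of_ne hne |>.mpr he))
    rcases ht.1 c List.mem_cons_self with hlen | hlen
    · obtain ⟨b, rfl⟩ := List.length_eq_one_iff.mp hlen
      have hm : (w.filter (b < ·)).max? = none := by
        simpa [List.filter_eq_nil_iff] using
          fun e he => (hlt e he fun h => hxw (by rwa [h] at he)).le
      change insertCols (w ++ [b]) = _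
      rw [insertCols_append_singleton_of_max?_eq_none hm, ← h]
      exact congrArg ([b] :: insertCols ·) (List.erase_of_not_mem hxw).symm
    · obtain ⟨m, b, rfl⟩ := List.length_eq_two.mp hlen
      have hbm : b < m := (List.isChain_cons_cons.mp (ht.2.1 _ List.mem_cons_self)).1
      have hmw : m ∈ w := by
        simpa [hbm.ne'] using hw.mem_iff.mpr (by simp : m ∈ ([m, b] :: t).flatten)
      have hm : (w.filter (b < ·)).max? = some m := by
        refine List.max?_eq_some_iff.mpr
          ⟨List.mem_filter.mpr ⟨hmw, by simpa⟩, fun e he => ?_⟩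
        by_cases hem : e = m
        · exact hem.le
        · exact (hlt e (List.mem_filter.mp he).1 hem).le
      change insertCols (w ++ [b]) = _
      rw [insertCols_append_singleton_of_max?_eq_some hm, ← h]
      rfl

end FirstColumn

theorem IsYFTableau.insertCols_eq_iff_respectsCanoGen {t : List (List ℕ)} (ht : IsYFTableau t)
    {w : List ℕ} (hw : w.Perm t.flatten) : insertCols w = t ↔ RespectsCanoGen t w := by
  induction t generalizing w with
  | nil =>
    obtain rfl : w = [] := by simpa using hw
    exact iff_of_true rfl fun _ _ h => by simpa using h.mem_flatten.1
  | cons c t ih =>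
    have hc := ht.ne_nil c List.mem_cons_self
    obtain rfl | ⟨w, x, rfl⟩ := w.eq_nil_or_concat
    · simpa [hc] using hw.symm
    rw [List.concat_eq_append] at hw ⊢
    rw [ht.insertCols_eq_cons_iff hc hw, ht.respectsCanoGen_cons_iff hc hw]
    exact and_congr_right fun hx => ih ht.tail (ht.perm_erase_head hc (hx ▸ hw))

/-- the Young–Fibonacci class of `t` is exactly the set of linear
extensions of the canonical poset `P_t`. -/
theorem yf_class_eq_linear_extensions (n : ℕ) (t : List (List ℕ))
    (ht : IsYFT n t) (w : List ℕ) (hw : w.Perm (List.range' 1 n)) :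
    insertCols w = t ↔ IsLinExt t w := by
  rw [ht.isYFTableau.isLinExt_iff]
  exact ht.isYFTableau.insertCols_eq_iff_respectsCanoGen (hw.trans ht.2.2.2.symm)
end

section
/- Let σ be a permutation of {1,…,n}, and for 0 ≤ k ≤ n let σ_{/[1..k]} denote the permutation of {1,…,k} obtained from the word σ(1)⋯σ(n) by deleting all letters greater than k. Then the sequence u⁰, u¹, …, uⁿ, where u^k is the shape of the Young-Fibonacci insertion tableau P(σ_{/[1..k]}), is a saturated chain in the Young-Fibonacci lattice from the empty snakeshape to the shape of P(σ); in particular, for each k the shape of P(σ_{/[1..k+1]}) covers the shape of P(σ_{/[1..k]}). -/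
/-!
Restricting `σ` to `[1..k]` is obtained from its restriction to `[1..k+1]` by deleting the
largest letter, so it suffices that deleting the largest letter `m` of a word `v` with
distinct letters turns the shape of `P(v)` into one it covers. Read the last letter `x`. If
`x = m`, it forms a leading single column, which disappears (rule (i)). Otherwise `x` is
matched with `m`; once `m` is deleted, `x` either stays single (rule (ii): the leading
column has height 1 instead of 2) or is matched with the next largest letter, and the remaining columns are those of
the word with one more largest letter deleted, so induction yields a cover behind the
leading column of height 2.
-/

lemma insertColsAux_succ_append_singleton (f : ℕ) (w : List ℕ) (x : ℕ) :
    insertColsAux (f + 1) (w ++ [x]) =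
      match (w.filter (fun y => decide (x < y))).max? with
      | none => [x] :: insertColsAux f w
      | some m => [m, x] :: insertColsAux f (w.erase m) := by
  obtain ⟨a, l, hal⟩ := List.exists_cons_of_ne_nil (List.append_ne_nil_of_right_ne_nil w
    (List.cons_ne_nil x []))
  have hlast : (w ++ [x]).getLast! = x := List.getLast!_of_getLast? List.getLast?_concat
  have hdrop : (w ++ [x]).dropLast = w := List.dropLast_concat
  rw [hal] at hlast hdrop ⊢
  simp only [insertColsAux, hlast, hdrop]

lemma insertColsAux_eq_of_length_le {w : List ℕ} {f₁ f₂ : ℕ} (h₁ : w.length ≤ f₁)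
    (h₂ : w.length ≤ f₂) : insertColsAux f₁ w = insertColsAux f₂ w := by
  induction f₁ generalizing w f₂ with
  | zero => cases List.eq_nil_of_length_eq_zero (Nat.le_zero.mp h₁); cases f₂ <;> rfl
  | succ f ih =>
    rcases w.eq_nil_or_concat' with rfl | ⟨w, x, rfl⟩
    · cases f₂ <;> rfl
    obtain ⟨g, rfl⟩ := Nat.exists_eq_add_one_of_ne_zero (by simp at h₂; omega : f₂ ≠ 0)
    simp only [List.length_append, List.length_singleton, add_le_add_iff_right] at h₁ h₂
    rw [insertColsAux_succ_append_singleton, insertColsAux_succ_append_singleton]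
    split
    · rw [ih h₁ h₂]
    next m _ =>
      have hle := (w.erase_sublist (a := m)).length_le
      rw [ih (hle.trans h₁) (hle.trans h₂)]

lemma insertCols_append_singleton (w : List ℕ) (x : ℕ) :
    insertCols (w ++ [x]) =
      match (w.filter (fun y => decide (x < y))).max? with
      | none => [x] :: insertCols w
      | some m => [m, x] :: insertCols (w.erase m) := by
  rw [insertCols, List.length_append, List.length_singleton,
    insertColsAux_succ_append_singleton]
  split
  · rfl
  next m _ =>
    rw [insertCols, insertColsAux_eq_of_length_le (w.erase_sublist (a := m)).length_le le_rfl]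

lemma cons_one_mem_coversList (u : List ℕ) : 1 :: u ∈ coversList u := by
  simp [coversList]

lemma two_cons_mem_coversList_one_cons (u : List ℕ) : 2 :: u ∈ coversList (1 :: u) := by
  simp [coversList]

lemma two_cons_mem_coversList_two_cons {u w : List ℕ} (h : w ∈ coversList u) :
    2 :: w ∈ coversList (2 :: u) := by
  have htake : (2 :: u).takeWhile (fun p => decide (p = 2)) =
      2 :: u.takeWhile (fun p => decide (p = 2)) := by
    simp
  simp only [coversList, htake, List.mem_append, List.mem_singleton, List.mem_map,
    List.mem_range, List.length_cons] at h ⊢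
  rcases h with (rfl | h) | ⟨i, hi, rfl⟩
  · exact Or.inr ⟨0, by omega, rfl⟩
  · split_ifs at h with hlt
    · simp only [List.mem_singleton] at h
      subst h
      left; right
      rw [if_pos (by omega)]
      simp
    · simp at h
  · exact Or.inr ⟨i + 1, by omega, rfl⟩

lemma List.max?_filter_lt_eq_some_iff {l : List ℕ} {x m : ℕ} :
    (l.filter (fun y => decide (x < y))).max? = some m ↔ m ∈ l ∧ x < m ∧ ∀ y ∈ l, y ≤ m := by
  simp only [List.max?_eq_some_iff, List.mem_filter, decide_eq_true_eq]
  constructor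
  · rintro ⟨⟨hm, hxm⟩, hmax⟩
    exact ⟨hm, hxm, fun y hy => (lt_or_ge x y).elim (fun h => hmax y ⟨hy, h⟩) (by omega)⟩
  · rintro ⟨hm, hxm, hmax⟩
    exact ⟨⟨hm, hxm⟩, fun y hy => hmax y hy.1⟩

theorem shapeOf_insertCols_mem_coversList_erase {v : List ℕ} (hv : v.Nodup) {m : ℕ}
    (hm : m ∈ v) (hmax : ∀ y ∈ v, y ≤ m) :
    shapeOf (insertCols v) ∈ coversList (shapeOf (insertCols (v.erase m))) := by
  induction hlen : v.length using Nat.strong_induction_on generalizing v m with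
  | _ len ih =>
    rcases v.eq_nil_or_concat' with rfl | ⟨w, x, rfl⟩
    · cases hm
    obtain ⟨hw, -, hxw⟩ := List.nodup_append.mp hv
    by_cases hxm : x = m
    · subst hxm
      have hxw : x ∉ w := fun h => hxw x h x (List.mem_singleton_self x) rfl
      have hnone : (w.filter (fun y => decide (x < y))).max? = none := by
        simpa using fun y hy => hmax y (List.mem_append_left _ hy)
      rw [List.erase_append_right _ hxw, List.erase_cons_head, List.append_nil,
        insertCols_append_singleton, hnone]
      exact cons_one_mem_coversList _
    have hmw : m ∈ w := by simpa [Ne.symm hxm] using hm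
    have hmatch : (w.filter (fun y => decide (x < y))).max? = some m :=
      List.max?_filter_lt_eq_some_iff.mpr
        ⟨hmw, lt_of_le_of_ne (hmax x (by simp)) hxm, fun y hy => hmax y (by simp [hy])⟩
    rw [List.erase_append_left _ hmw, insertCols_append_singleton w, hmatch,
      insertCols_append_singleton]
    split
    · exact two_cons_mem_coversList_one_cons _
    next m' hm' =>
      obtain ⟨hm'w, -, hm'max⟩ := List.max?_filter_lt_eq_some_iff.mp hm'
      have hshorter : (w.erase m).length < len := by
        have := (w.erase_sublist (a := m)).length_le
        simp only [← hlen, List.length_append, List.length_singleton]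
        omega
      exact two_cons_mem_coversList_two_cons (ih _ hshorter (hw.erase m) hm'w hm'max rfl)

lemma List.Nodup.erase_filter_le_add_one {l : List ℕ} (hl : l.Nodup) (k : ℕ) :
    (l.filter (fun x => decide (x ≤ k + 1))).erase (k + 1) =
      l.filter (fun x => decide (x ≤ k)) := by
  rw [(hl.filter _).erase_eq_filter, List.filter_filter]
  refine List.filter_congr fun x _ => ?_
  rw [Bool.eq_iff_iff]
  simp only [Bool.and_eq_true, bne_iff_ne, decide_eq_true_eq]
  omega

lemma nodup_permWord {n : ℕ} (σ : Equiv.Perm (Fin n)) : (permWord σ).Nodup :=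
  List.nodup_ofFn.mpr fun i j h => σ.injective (Fin.val_injective (by simpa using h))

lemma mem_permWord {n : ℕ} (σ : Equiv.Perm (Fin n)) {x : ℕ} :
    x ∈ permWord σ ↔ 1 ≤ x ∧ x ≤ n := by
  simp only [permWord, List.mem_ofFn]
  constructor
  · rintro ⟨i, rfl⟩
    exact ⟨by omega, (σ i).isLt⟩
  · rintro ⟨h₁, h₂⟩
    exact ⟨σ.symm ⟨x - 1, by omega⟩, by simp; omega⟩

/-- the shapes of the insertion tableaux of the restrictions
`σ_{/[1..k]}` form a saturated chain in the Young–Fibonacci lattice from the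
empty snakeshape to the shape of `P(σ)`. -/
theorem restriction_shapes_form_saturated_chain (n : ℕ) (σ : Equiv.Perm (Fin n)) :
    shapeOf (insertCols ((permWord σ).filter (fun x => decide (x ≤ 0)))) = [] ∧
    shapeOf (insertCols ((permWord σ).filter (fun x => decide (x ≤ n)))) =
      shapeOf (insertCols (permWord σ)) ∧
    ∀ k : ℕ, k < n →
      shapeOf (insertCols ((permWord σ).filter (fun x => decide (x ≤ k + 1)))) ∈
        coversList
          (shapeOf (insertCols ((permWord σ).filter (fun x => decide (x ≤ k))))) := by
  have hempty : (permWord σ).filter (fun x => decide (x ≤ 0)) = [] :=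
    List.filter_eq_nil_iff.mpr fun x hx => by simpa using Nat.one_le_iff_ne_zero.mp ((mem_permWord σ).mp hx).1
  have hall : (permWord σ).filter (fun x => decide (x ≤ n)) = permWord σ :=
    List.filter_eq_self.mpr fun x hx => by simp [((mem_permWord σ).mp hx).2]
  refine ⟨by rw [hempty]; rfl, by rw [hall], fun k hk => ?_⟩
  rw [← (nodup_permWord σ).erase_filter_le_add_one k]
  refine shapeOf_insertCols_mem_coversList_erase ((nodup_permWord σ).filter _) ?_ ?_
  · simpa [mem_permWord] using hk
  · simp
end
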